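/- arXiv:1806.09192 — 2 statements merged into one kernel-verified Lean document; each statement's English description precedes it below -/
import Mathlib

section
/- Let δ ∈ (0, 1/2), w > 0, and ε > 0. If σ ≥ w·√(2·ln(1/(2δ)) + 2ε)/ε, then for any two means μ, μ' with |μ − μ'| ≤ w, the Gaussian densities satisfy: for all x outside a set of probability at most δ under N(μ, σ²), the density ratio N(μ,σ²)(x)/N(μ',σ²)(x) is at most e^ε. -/
/-!
The privacy loss `log (p_μ x / p_μ' x) = (2 (μ - μ') (x - μ) + (μ - μ')²) / (2σ²)` is
affine in `x`, so it exceeds `ε` only on a half-line on one side of `μ`; the bound on `σ`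
places that half-line beyond `μ ± T` with `T = σ √(2 log (1 / (2δ)))`. Beyond `μ + T` the
density of `N(μ, σ²)` is at most `exp (-T² / (2σ²))` times that of `N(μ + T, σ²)`, half of
whose mass lies there, so the tail has mass at most `exp (-T² / (2σ²)) / 2 = δ`.
-/

open MeasureTheory ProbabilityTheory Real Set
open scoped NNReal

namespace ProbabilityTheory

variable {v : ℝ≥0}

lemma gaussianReal_Iio_sub_eq_Ioi_add (m u : ℝ) :
    gaussianReal m v (Iio (m - u)) = gaussianReal m v (Ioi (m + u)) := by
  have hpre : (2 * m - ·) ⁻¹' Ioi (m + u) = Iio (m - u) := by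
    ext x; simp only [mem_preimage, mem_Ioi, mem_Iio]; constructor <;> intro h <;> linarith
  rw [← hpre, ← Measure.map_apply (by fun_prop) measurableSet_Ioi, gaussianReal_map_const_sub,
    two_mul, add_sub_cancel_right]

lemma gaussianReal_Ioi_self (m : ℝ) (hv : v ≠ 0) : gaussianReal m v (Ioi m) = 2⁻¹ := by
  have := nullSingletonClass_gaussianReal (μ := m) hv
  have hsum : gaussianReal m v (Iic m) + gaussianReal m v (Ioi m) = 1 := by
    rw [← compl_Iic, measure_add_measure_compl measurableSet_Iic, measure_univ]
  have hsymm := gaussianReal_Iio_sub_eq_Ioi_add (v := v) m 0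
  rw [sub_zero, add_zero] at hsymm
  rw [← measure_congr Iio_ae_eq_Iic, hsymm, ← two_mul] at hsum
  exact ENNReal.eq_inv_of_mul_eq_one_left (by rwa [mul_comm])

lemma gaussianPDFReal_le_exp_mul_gaussianPDFReal_add (m u x : ℝ) (hx : m + u ≤ x)
    (hu : 0 ≤ u) :
    gaussianPDFReal m v x ≤ exp (-u ^ 2 / (2 * v)) * gaussianPDFReal (m + u) v x := by
  rw [gaussianPDFReal, gaussianPDFReal, mul_left_comm, ← exp_add, ← add_div]
  gcongr
  nlinarith

lemma gaussianReal_Ioi_add_le (m u : ℝ) (hv : v ≠ 0) (hu : 0 ≤ u) :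
    gaussianReal m v (Ioi (m + u)) ≤ ENNReal.ofReal (exp (-u ^ 2 / (2 * v)) / 2) := by
  calc gaussianReal m v (Ioi (m + u))
      = ∫⁻ x in Ioi (m + u), gaussianPDF m v x := gaussianReal_apply m hv _
    _ ≤ ∫⁻ x in Ioi (m + u),
          ENNReal.ofReal (exp (-u ^ 2 / (2 * v))) * gaussianPDF (m + u) v x := by
        refine setLIntegral_mono' measurableSet_Ioi fun x hx => ?_
        rw [gaussianPDF, gaussianPDF, ← ENNReal.ofReal_mul (exp_nonneg _)]
        exact ENNReal.ofReal_le_ofReal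
          (gaussianPDFReal_le_exp_mul_gaussianPDFReal_add m u x (le_of_lt hx) hu)
    _ = ENNReal.ofReal (exp (-u ^ 2 / (2 * v))) * gaussianReal (m + u) v (Ioi (m + u)) := by
        rw [lintegral_const_mul _ (measurable_gaussianPDF _ _), gaussianReal_apply _ hv]
    _ = ENNReal.ofReal (exp (-u ^ 2 / (2 * v)) / 2) := by
        rw [gaussianReal_Ioi_self _ hv, ENNReal.ofReal_div_of_pos two_pos, ENNReal.ofReal_ofNat,
          ← div_eq_mul_inv]

lemma gaussianPDFReal_div_gaussianPDFReal (μ μ' x : ℝ) (hv : v ≠ 0) :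
    gaussianPDFReal μ v x / gaussianPDFReal μ' v x
      = exp (((x - μ') ^ 2 - (x - μ) ^ 2) / (2 * v)) := by
  have hc : (√(2 * π * v))⁻¹ ≠ 0 := by positivity
  rw [gaussianPDFReal, gaussianPDFReal, mul_div_mul_left _ _ hc, ← exp_sub]
  ring_nf

lemma gaussianPDFReal_div_le_exp (μ μ' x ε : ℝ) (hv : v ≠ 0)
    (h : 2 * (μ - μ') * (x - μ) + (μ - μ') ^ 2 ≤ 2 * v * ε) :
    gaussianPDFReal μ v x / gaussianPDFReal μ' v x ≤ exp ε := by
  rw [gaussianPDFReal_div_gaussianPDFReal μ μ' x hv, exp_le_exp, div_le_iff₀ (by positivity)]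
  linarith

end ProbabilityTheory

lemma two_mul_mul_sqrt_add_sq_le {L ε w σ : ℝ} (hL : 0 ≤ L) (hε : 0 < ε) (hw : 0 ≤ w)
    (hσ : w * √(2 * L + 2 * ε) / ε ≤ σ) :
    2 * w * (σ * √(2 * L)) + w ^ 2 ≤ 2 * ε * σ ^ 2 := by
  set R := √(2 * L)
  set S := √(2 * L + 2 * ε)
  have hR : 0 ≤ R := sqrt_nonneg _
  have hRS : R ≤ S := sqrt_le_sqrt (by linarith)
  have hS2 : S ^ 2 = R ^ 2 + 2 * ε := by
    rw [sq_sqrt (by linarith), sq_sqrt (by linarith)]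
  have hεσ : w * S ≤ ε * σ := by rwa [div_le_iff₀ hε, mul_comm σ] at hσ
  have hmono : w * S * (w * S - w * R) ≤ ε * σ * (ε * σ - w * R) :=
    mul_le_mul hεσ (by linarith) (by nlinarith) (by nlinarith)
  -- with `y = ε σ ≥ w S`: `2 y (y - w R) ≥ 2 w S (w S - w R) ≥ w² (S² - R²) = 2 ε w²`
  nlinarith [sq_nonneg (S - R), mul_nonneg hw hw]

lemma exp_neg_sq_mul_sqrt_two_mul_log_div_two_eq {σ δ : ℝ} (hσ : σ ≠ 0) (hδ : 0 < δ)
    (hδ2 : δ ≤ 1 / 2) :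
    exp (-(σ * √(2 * Real.log (1 / (2 * δ)))) ^ 2 / (2 * σ ^ 2)) / 2 = δ := by
  have hL : 0 ≤ Real.log (1 / (2 * δ)) :=
    log_nonneg (by rw [le_div_iff₀ (by linarith)]; linarith)
  have hexponent : -(σ * √(2 * Real.log (1 / (2 * δ)))) ^ 2 / (2 * σ ^ 2)
      = -Real.log (1 / (2 * δ)) := by
    rw [mul_pow, sq_sqrt (by linarith)]
    field_simp
  rw [hexponent, exp_neg, exp_log (by positivity)]
  field_simp

theorem gaussian_mechanism_pointwise_dp
    (δ w ε σ : ℝ) (hδ : δ ∈ Set.Ioo (0:ℝ) (1/2)) (hw : 0 < w) (hε : 0 < ε)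
    (hσ : σ ≥ w * Real.sqrt (2 * Real.log (1 / (2 * δ)) + 2 * ε) / ε)
    (μ μ' : ℝ) (hμ : |μ - μ'| ≤ w) :
    ∃ A : Set ℝ, MeasurableSet A ∧
      gaussianReal μ ⟨σ ^ 2, sq_nonneg σ⟩ A ≤ ENNReal.ofReal δ ∧
      ∀ x ∉ A,
        gaussianPDFReal μ ⟨σ ^ 2, sq_nonneg σ⟩ x /
          gaussianPDFReal μ' ⟨σ ^ 2, sq_nonneg σ⟩ x ≤ Real.exp ε := by
  obtain ⟨hδ0, hδ2⟩ := hδ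
  set L := Real.log (1 / (2 * δ))
  have hL : 0 ≤ L := log_nonneg (by rw [le_div_iff₀ (by linarith)]; linarith)
  have hσ0 : 0 < σ := (div_pos (mul_pos hw (sqrt_pos.2 (by linarith))) hε).trans_le hσ
  set v : ℝ≥0 := ⟨σ ^ 2, sq_nonneg σ⟩
  have hvσ : (v : ℝ) = σ ^ 2 := rfl
  have hv : v ≠ 0 := fun h => (pow_pos hσ0 2).ne' (congrArg NNReal.toReal h)
  set T := σ * √(2 * L)
  have hT : 0 ≤ T := by positivity
  have htail : ENNReal.ofReal (exp (-T ^ 2 / (2 * v)) / 2) = ENNReal.ofReal δ :=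
    congrArg ENNReal.ofReal (exp_neg_sq_mul_sqrt_two_mul_log_div_two_eq hσ0.ne' hδ0 hδ2.le)
  have hd2 : (μ - μ') ^ 2 ≤ w ^ 2 := sq_le_sq' (abs_le.1 hμ).1 (abs_le.1 hμ).2
  have hbudget := two_mul_mul_sqrt_add_sq_le hL hε hw.le hσ
  have hratio : ∀ x, (μ - μ') * (x - μ) ≤ w * T →
      gaussianPDFReal μ v x / gaussianPDFReal μ' v x ≤ exp ε := fun x hx =>
    gaussianPDFReal_div_le_exp μ μ' x ε hv (by rw [hvσ]; nlinarith)
  rcases le_total 0 (μ - μ') with hpos | hneg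
  · refine ⟨Ioi (μ + T), measurableSet_Ioi, (gaussianReal_Ioi_add_le μ T hv hT).trans_eq htail,
      fun x hx => hratio x ?_⟩
    rw [mem_Ioi, not_lt] at hx
    nlinarith [(abs_le.1 hμ).2]
  · refine ⟨Iio (μ - T), measurableSet_Iio, ?_, fun x hx => hratio x ?_⟩
    · rw [gaussianReal_Iio_sub_eq_Ioi_add]
      exact (gaussianReal_Ioi_add_le μ T hv hT).trans_eq htail
    · rw [mem_Iio, not_lt] at hx
      nlinarith [(abs_le.1 hμ).1]
end

section
/- Let c > 0 and for k ∈ ℕ let ε_k = (1 + √c)/√(k+1). If δ = T^{−4} and c = 1 + 2·ln(T⁴/2), then for all T ≥ 2, the advanced-composition bound ∑_{k=0}^{T−1} ε_k² / 2 + √(2·∑_{k=0}^{T−1} ε_k² · ln(1/δ')) with δ' = T^{−4} is at most C·(ln T)² for an absolute constant C. -/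
theorem ts_advanced_composition_log_sq_bound :
    ∃ C : ℝ, 0 < C ∧ ∀ T : ℕ, 2 ≤ T →
      let c : ℝ := 1 + 2 * Real.log ((T : ℝ) ^ 4 / 2)
      let S : ℝ := ∑ k ∈ Finset.range T, ((1 + Real.sqrt c) / Real.sqrt (k + 1)) ^ 2
      let δ' : ℝ := (T : ℝ) ^ (-4 : ℤ)
      S / 2 + Real.sqrt (2 * S * Real.log (1 / δ')) ≤ C * (Real.log T) ^ 2 := by
  refine ⟨100, by norm_num, ?_⟩
  intro T hT c S δ'
  have hT1 : (2:ℝ) ≤ (T:ℝ) := by exact_mod_cast hT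
  have hTpos : (0:ℝ) < T := by linarith
  set L : ℝ := Real.log T with hLdef
  have hlog2 : Real.log 2 ≤ L := Real.log_le_log (by norm_num) hT1
  have hL2 : (1:ℝ) ≤ 2 * L := by
    have := Real.log_two_gt_d9
    linarith
  have hL0 : 0 < L := by linarith
  -- c bounds
  have hT4 : (1:ℝ) ≤ (T:ℝ)^4 / 2 := by
    have h16 : (2:ℝ)^4 ≤ (T:ℝ)^4 := pow_le_pow_left₀ (by norm_num) hT1 4
    norm_num at h16 ⊢; linarith
  have hc0 : (0:ℝ) ≤ c := by
    have := Real.log_nonneg hT4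
    simp only [c]; linarith
  have hc_le : c ≤ 1 + 8 * L := by
    have h1 : Real.log ((T:ℝ)^4 / 2) ≤ Real.log ((T:ℝ)^4) :=
      Real.log_le_log (by positivity) (by nlinarith)
    have h2 : Real.log ((T:ℝ)^4) = 4 * L := by
      rw [Real.log_pow]; push_cast; ring
    simp only [c]; linarith
  -- (1 + √c)^2 ≤ 24 L
  have hsq : (1 + Real.sqrt c) ^ 2 ≤ 24 * L := by
    have hs : Real.sqrt c ^ 2 = c := Real.sq_sqrt hc0
    have hs0 : 0 ≤ Real.sqrt c := Real.sqrt_nonneg c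
    nlinarith [sq_nonneg (1 - Real.sqrt c)]
  -- S = (1+√c)^2 * harmonic T
  have hH : ∑ k ∈ Finset.range T, ((k:ℝ) + 1)⁻¹ = ((harmonic T : ℚ) : ℝ) := by
    rw [harmonic]
    push_cast
    rfl
  have hHle : ((harmonic T : ℚ) : ℝ) ≤ 3 * L := by
    have := harmonic_le_one_add_log T
    linarith
  have hSeq : S = (1 + Real.sqrt c) ^ 2 * ∑ k ∈ Finset.range T, ((k:ℝ) + 1)⁻¹ := by
    simp only [S]
    rw [Finset.mul_sum]
    refine Finset.sum_congr rfl fun k _ => ?_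
    have hk : (0:ℝ) ≤ (k:ℝ) + 1 := by positivity
    rw [div_pow, Real.sq_sqrt hk, div_eq_mul_inv]
  have hSle : S ≤ 72 * L ^ 2 := by
    rw [hSeq, hH]
    have h0 : (0:ℝ) ≤ ((harmonic T : ℚ) : ℝ) := by
      have := harmonic_pos (n := T) (by omega)
      exact_mod_cast this.le
    calc (1 + Real.sqrt c) ^ 2 * ((harmonic T : ℚ) : ℝ)
        ≤ (24 * L) * (3 * L) := by
          apply mul_le_mul hsq hHle h0 (by positivity)
      _ = 72 * L ^ 2 := by ring
  have hS0 : 0 ≤ S := by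
    rw [hSeq]; positivity
  -- log(1/δ') = 4 L
  have hδ : Real.log (1 / δ') = 4 * L := by
    have : (1:ℝ) / δ' = (T:ℝ) ^ (4:ℕ) := by
      simp only [δ', one_div, ← zpow_natCast, ← zpow_neg]
      norm_num
    rw [this, Real.log_pow]; push_cast; ring
  rw [hδ]
  have hsqrt : Real.sqrt (2 * S * (4 * L)) ≤ 34 * L ^ 2 := by
    have harg : 2 * S * (4 * L) ≤ (34 * L ^ 2) ^ 2 := by
      have hL3 : L ^ 3 ≤ 2 * L ^ 4 := by
        nlinarith [mul_le_mul_of_nonneg_left hL2 (le_of_lt (pow_pos hL0 3))]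
      nlinarith
    calc Real.sqrt (2 * S * (4 * L)) ≤ Real.sqrt ((34 * L ^ 2) ^ 2) :=
          Real.sqrt_le_sqrt harg
      _ = 34 * L ^ 2 := Real.sqrt_sq (by positivity)
  linarith
end
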